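/- arXiv:2604.07367 — 4 statements merged into one kernel-verified Lean document; each statement's English description precedes it below -/
import Mathlib

section
/- The annuity factor φ(r,T) = r·(1+r)^T/((1+r)^T − 1), defined for r > 0 and T > 0, is log-log-convex: the map (u,v) ↦ log φ(e^u, e^v) is convex on ℝ². -/
/-!
With `r = eᵘ`, `T = eᵛ` and `w = log (log (1 + eᵘ)) + v` one has `(1 + r)^T = exp (eʷ)`, hence
`log φ(eᵘ, eᵛ) = u + h w` with `h w = -log (1 - exp (-eʷ))`. Here `w` is concave in `(u, v)` and
`h` is convex and decreasing, so the composite is convex. Both second-order facts come from the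
monotonicity of the secant slope `S x = (eˣ - 1) / x` of the convex function `exp`:
`h' w = -1 / S (eʷ)` and `d/du log (log (1 + eᵘ)) = S (-log (1 + eᵘ))`.
-/

/-- The annuity factor `φ(r, T) = r·(1+r)^T/((1+r)^T − 1)` for `r, T > 0`,
where `(1+r)^T = exp(T·log(1+r))`. -/
noncomputable def annuityRT (r T : ℝ) : ℝ :=
  r * (1 + r) ^ T / ((1 + r) ^ T - 1)

open Real Set

theorem ConvexOn.comp_concaveOn_of_antitone {E : Type*} [AddCommGroup E] [Module ℝ E]
    {s : Set E} {f : E → ℝ} {g : ℝ → ℝ} (hg : ConvexOn ℝ univ g) (hg' : Antitone g)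
    (hf : ConcaveOn ℝ s f) : ConvexOn ℝ s (g ∘ f) :=
  ⟨hf.1, fun _ hx _ hy _ _ ha hb hab =>
    (hg' (hf.2 hx hy ha hb hab)).trans (hg.2 trivial trivial ha hb hab)⟩

noncomputable def expSlope (x : ℝ) : ℝ := (exp x - 1) / x

theorem expSlope_monotoneOn : MonotoneOn expSlope {0}ᶜ := fun x hx y hy hxy => by
  simpa [expSlope] using
    convexOn_exp.secant_mono (mem_univ 0) (mem_univ x) (mem_univ y) hx hy hxy

theorem expSlope_pos {x : ℝ} (hx : x ≠ 0) : 0 < expSlope x := by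
  rcases hx.lt_or_gt with hx | hx
  · exact div_pos_of_neg_of_neg (by linarith [exp_lt_one_iff.mpr hx]) hx
  · exact div_pos (by linarith [one_lt_exp_iff.mpr hx]) hx

noncomputable def negLogOneSubExpNegExp (w : ℝ) : ℝ := -log (1 - exp (-exp w))

theorem one_sub_exp_neg_exp_pos (w : ℝ) : 0 < 1 - exp (-exp w) := by
  simpa using exp_lt_one_iff.mpr (neg_neg_of_pos (exp_pos w))

theorem hasDerivAt_negLogOneSubExpNegExp (w : ℝ) :
    HasDerivAt negLogOneSubExpNegExp (-(expSlope (exp w))⁻¹) w := by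
  have h := (((hasDerivAt_exp w).neg.exp).const_sub 1).log (one_sub_exp_neg_exp_pos w).ne'
  refine h.neg.congr_deriv ?_
  have : exp (exp w) - 1 ≠ 0 := (sub_pos.mpr (one_lt_exp_iff.mpr (exp_pos w))).ne'
  unfold expSlope
  rw [Pi.neg_apply, exp_neg]
  field_simp

theorem convexOn_negLogOneSubExpNegExp : ConvexOn ℝ univ negLogOneSubExpNegExp := by
  refine Monotone.convexOn_univ_of_deriv
    (fun w => (hasDerivAt_negLogOneSubExpNegExp w).differentiableAt) fun x y hxy => ?_
  simp only [(hasDerivAt_negLogOneSubExpNegExp _).deriv, neg_le_neg_iff]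
  have hx := exp_pos x
  exact inv_anti₀ (expSlope_pos hx.ne')
    (expSlope_monotoneOn hx.ne' (exp_pos y).ne' (exp_le_exp.mpr hxy))

theorem antitone_negLogOneSubExpNegExp : Antitone negLogOneSubExpNegExp := fun x y hxy => by
  refine neg_le_neg (log_le_log (one_sub_exp_neg_exp_pos x) ?_)
  gcongr

noncomputable def logLogOneAddExp (u : ℝ) : ℝ := log (log (1 + exp u))

theorem log_one_add_exp_pos (u : ℝ) : 0 < log (1 + exp u) :=
  log_pos (by linarith [exp_pos u])

theorem hasDerivAt_logLogOneAddExp (u : ℝ) :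
    HasDerivAt logLogOneAddExp (expSlope (-log (1 + exp u))) u := by
  have hlog := log_one_add_exp_pos u
  have h := (((hasDerivAt_exp u).const_add 1).log (by positivity)).log hlog.ne'
  refine h.congr_deriv ?_
  unfold expSlope
  rw [exp_neg, exp_log (by positivity)]
  field_simp
  ring

theorem concaveOn_logLogOneAddExp : ConcaveOn ℝ univ logLogOneAddExp := by
  refine Antitone.concaveOn_univ_of_deriv
    (fun u => (hasDerivAt_logLogOneAddExp u).differentiableAt) fun x y hxy => ?_
  simp only [(hasDerivAt_logLogOneAddExp _).deriv]
  refine expSlope_monotoneOn (neg_ne_zero.mpr (log_one_add_exp_pos y).ne')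
    (neg_ne_zero.mpr (log_one_add_exp_pos x).ne') (neg_le_neg ?_)
  gcongr

theorem log_annuityRT_exp_exp (u v : ℝ) :
    log (annuityRT (exp u) (exp v)) = u + negLogOneSubExpNegExp (logLogOneAddExp u + v) := by
  set w := logLogOneAddExp u + v
  have hA : (1 + exp u) ^ exp v = exp (exp w) := by
    rw [rpow_def_of_pos (by positivity), exp_add, logLogOneAddExp,
      exp_log (log_one_add_exp_pos u)]
  have hA1 : exp (exp w) - 1 ≠ 0 := (sub_pos.mpr (one_lt_exp_iff.mpr (exp_pos w))).ne'
  have hφ : annuityRT (exp u) (exp v) = exp u / (1 - exp (-exp w)) := by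
    rw [annuityRT, hA, exp_neg]
    field_simp
  rw [hφ, log_div (exp_pos u).ne' (one_sub_exp_neg_exp_pos w).ne', log_exp,
    negLogOneSubExpNegExp, sub_eq_add_neg]

/-- **Log-log-convexity of the annuity factor.** The map
`(u, v) ↦ log φ(e^u, e^v)` is convex on `ℝ²`. -/
theorem annuity_logLogConvex :
    ConvexOn ℝ Set.univ
      (fun uv : ℝ × ℝ => Real.log (annuityRT (Real.exp uv.1) (Real.exp uv.2))) := by
  simp only [log_annuityRT_exp_exp]
  have hw : ConcaveOn ℝ univ fun uv : ℝ × ℝ => logLogOneAddExp uv.1 + uv.2 :=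
    (concaveOn_logLogOneAddExp.comp_linearMap (LinearMap.fst ℝ ℝ ℝ)).add
      ((LinearMap.snd ℝ ℝ ℝ).concaveOn convex_univ)
  exact ((LinearMap.fst ℝ ℝ ℝ).convexOn convex_univ).add
    (convexOn_negLogOneSubExpNegExp.comp_concaveOn_of_antitone antitone_negLogOneSubExpNegExp hw)
end

section
/- Fix r > 0 and T > 0, and set s = log(1+r), s' = r/(1+r), s'' = r/(1+r)², w = T·s, g' = −1/(e^w − 1), g'' = e^w/(e^w − 1)². Define H₁₁ = g''·T²·(s')² + g'·T·s'', H₂₂ = g''·w² + g'·w, H₁₂ = g''·T·s'·w + g'·T·s'. Then H₁₁·H₂₂ − H₁₂² = T²·(s·s'' − (s')²)·g'·(g''·w + g'), and this quantity is strictly positive. -/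
/-- **Determinant computation in the proof of log-log-convexity of the annuity
factor.** Fix `r > 0`, `T > 0` and set `s = log(1+r)`, `s' = r/(1+r)`,
`s'' = r/(1+r)²`, `w = T·s`, `g' = −1/(e^w − 1)`, `g'' = e^w/(e^w − 1)²`,
`H₁₁ = g''·T²·(s')² + g'·T·s''`, `H₂₂ = g''·w² + g'·w`,
`H₁₂ = g''·T·s'·w + g'·T·s'`. Then
`H₁₁·H₂₂ − H₁₂² = T²·(s·s'' − (s')²)·g'·(g''·w + g')`, and this quantity is
strictly positive. -/
theorem annuity_hessian_det
    (r T s s' s'' w g' g'' H11 H22 H12 : ℝ)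
    (hr : 0 < r) (hT : 0 < T)
    (hs : s = Real.log (1 + r))
    (hs' : s' = r / (1 + r))
    (hs'' : s'' = r / (1 + r) ^ 2)
    (hw : w = T * s)
    (hg' : g' = -1 / (Real.exp w - 1))
    (hg'' : g'' = Real.exp w / (Real.exp w - 1) ^ 2)
    (hH11 : H11 = g'' * T ^ 2 * s' ^ 2 + g' * T * s'')
    (hH22 : H22 = g'' * w ^ 2 + g' * w)
    (hH12 : H12 = g'' * T * s' * w + g' * T * s') :
    H11 * H22 - H12 ^ 2 = T ^ 2 * (s * s'' - s' ^ 2) * g' * (g'' * w + g') ∧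
    0 < H11 * H22 - H12 ^ 2 := by
  have h1r : (0:ℝ) < 1 + r := by linarith
  have hspos : 0 < s := by rw [hs]; exact Real.log_pos (by linarith)
  have hwpos : 0 < w := by rw [hw]; positivity
  have hE1 : 1 < Real.exp w := by
    calc (1:ℝ) = Real.exp 0 := (Real.exp_zero).symm
    _ < Real.exp w := Real.exp_lt_exp.2 hwpos
  have hEm : 0 < Real.exp w - 1 := by linarith
  -- g' < 0
  have hg'neg : g' < 0 := by
    rw [hg']; exact div_neg_of_neg_of_pos (by norm_num) hEm
  -- e^w(w-1)+1 > 0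
  have hnum : 0 < Real.exp w * w - (Real.exp w - 1) := by
    have h := Real.add_one_lt_exp (show (-w) ≠ 0 by linarith)
    rw [Real.exp_neg] at h
    have hEpos : 0 < Real.exp w := Real.exp_pos w
    have : Real.exp w * (-w + 1) < Real.exp w * (Real.exp w)⁻¹ :=
      (mul_lt_mul_iff_right₀ hEpos).2 h
    rw [mul_inv_cancel₀ (ne_of_gt hEpos)] at this
    nlinarith
  have hsum : 0 < g'' * w + g' := by
    have heq : g'' * w + g' = (Real.exp w * w - (Real.exp w - 1)) / (Real.exp w - 1) ^ 2 := by
      rw [hg', hg'']; field_simp; ring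
    rw [heq]
    exact div_pos hnum (by positivity)
  -- s·s'' − s'² < 0
  have hslt : s < r := by
    rw [hs]
    have := Real.add_one_lt_exp (ne_of_gt hr)
    have : Real.log (1 + r) < Real.log (Real.exp r) := by
      apply Real.log_lt_log h1r
      rw [add_comm]; linarith
    rwa [Real.log_exp] at this
  have hAneg : s * s'' - s' ^ 2 < 0 := by
    have heq : s * s'' - s' ^ 2 = (r / (1 + r) ^ 2) * (s - r) := by
      rw [hs', hs'']; field_simp
    rw [heq]
    exact mul_neg_of_pos_of_neg (by positivity) (by linarith)
  have hid : H11 * H22 - H12 ^ 2 = T ^ 2 * (s * s'' - s' ^ 2) * g' * (g'' * w + g') := by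
    subst hH11 hH22 hH12 hw; ring
  refine ⟨hid, ?_⟩
  rw [hid]
  have hT2 : 0 < T ^ 2 := by positivity
  nlinarith [mul_pos_of_neg_of_neg hAneg hg'neg, mul_pos (mul_pos hT2 (mul_pos_of_neg_of_neg hAneg hg'neg)) hsum]
end

section
/- The economic gain factor Q_econ is log-log-concave as a function of all ten parameters on ℝ¹⁰₊₊: the map ℓ = (ℓ₁,…,ℓ₁₀) ∈ ℝ¹⁰ ↦ log Q_econ(e^{ℓ₁},…,e^{ℓ₁₀}) is concave on ℝ¹⁰. -/
/-- The annuity (amortization) factor `φ(i, τL)` with the interest rate `i` in percent. -/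
noncomputable def annuity (i tL : ℝ) : ℝ :=
  0.01 * i * (1 + 0.01 * i) ^ tL / ((1 + 0.01 * i) ^ tL - 1)

/-- The utilization factor `U = X / (X + p·τ)`. -/
noncomputable def util (p tau X : ℝ) : ℝ := X / (X + p * tau)

/-- The economic gain factor `Q_econ` of the fusion power plant model,
with `α = 8.76×10⁻³` and `β = 31.5`. -/
noncomputable def Qecon (p tau tL E X eta cY mS mF i : ℝ) : ℝ :=
  (8.76e-3 * E * eta * p * util p tau X) /
    (31.5 * cY * p * util p tau X + mS * (p / X) * util p tau X + mF * annuity i tL)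

/-- `Q_econ` as a function of the vector of the ten parameters
`(p, τ, τL, E, X, η, cY, mS, mF, i)`. -/
noncomputable def QeconV (θ : Fin 10 → ℝ) : ℝ :=
  Qecon (θ 0) (θ 1) (θ 2) (θ 3) (θ 4) (θ 5) (θ 6) (θ 7) (θ 8) (θ 9)

/-!
Multiplying numerator and denominator of `Q_econ` by `X + p τ` gives, in the coordinates
`ℓ = log θ`, `log Q_econ = log α + ℓ_E + ℓ_η + ℓ_p + ℓ_X - log D` with
`D = β cY p X + mS p + mF φ X + mF φ p τ`, so it suffices that `D` is log-convex in `ℓ`.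
Positive log-convex functions are closed under products and, by Hölder's inequality, under sums,
and `exp ℓⱼ` is log-convex; this leaves the annuity factor. With `r = 0.01 eˢ` and `T = eᵗ`,
`(1 + r)^T = exp (exp (t + log (log (1 + r))))`, hence
`log φ = log 0.01 + s + h (t + a s)` where `h u = -log (1 - exp (-eᵘ))` is convex and decreasing
and `a s = log (log (1 + 0.01 eˢ))` is concave. Both facts follow from the monotonicity of the
derivatives, which reduces to the convexity of `exp` and of `x log x` via monotone secant slopes.
-/

open Real Set

theorem rpow_mul_rpow_add_rpow_mul_rpow_le {u₁ u₂ v₁ v₂ a b : ℝ} (hu₁ : 0 < u₁) (hu₂ : 0 < u₂)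
    (hv₁ : 0 < v₁) (hv₂ : 0 < v₂) (ha : 0 ≤ a) (hb : 0 ≤ b) (hab : a + b = 1) :
    u₁ ^ a * v₁ ^ b + u₂ ^ a * v₂ ^ b ≤ (u₁ + u₂) ^ a * (v₁ + v₂) ^ b := by
  have hU : 0 < u₁ + u₂ := add_pos hu₁ hu₂
  have hV : 0 < v₁ + v₂ := add_pos hv₁ hv₂
  -- weighted AM-GM applied to `u / U` and `v / V`, where `U = u₁ + u₂` and `V = v₁ + v₂`
  have hterm : ∀ u v : ℝ, 0 < u → 0 < v → u ^ a * v ^ b ≤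
      (u₁ + u₂) ^ a * (v₁ + v₂) ^ b * (a * (u / (u₁ + u₂)) + b * (v / (v₁ + v₂))) :=
    fun u v hu hv => calc
      u ^ a * v ^ b
          = (u₁ + u₂) ^ a * (v₁ + v₂) ^ b * ((u / (u₁ + u₂)) ^ a * (v / (v₁ + v₂)) ^ b) := by
        rw [div_rpow hu.le hU.le, div_rpow hv.le hV.le]
        field_simp
      _ ≤ _ := mul_le_mul_of_nonneg_left
          (geom_mean_le_arith_mean2_weighted ha hb (by positivity) (by positivity) hab)
          (by positivity)
  calc u₁ ^ a * v₁ ^ b + u₂ ^ a * v₂ ^ b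
      ≤ _ := add_le_add (hterm u₁ v₁ hu₁ hv₁) (hterm u₂ v₂ hu₂ hv₂)
    _ = (u₁ + u₂) ^ a * (v₁ + v₂) ^ b *
          (a * ((u₁ + u₂) / (u₁ + u₂)) + b * ((v₁ + v₂) / (v₁ + v₂))) := by ring
    _ = (u₁ + u₂) ^ a * (v₁ + v₂) ^ b := by
        rw [div_self hU.ne', div_self hV.ne', mul_one, mul_one, hab, mul_one]

section LogConvex

variable {E : Type*} [AddCommGroup E] [Module ℝ E] {s : Set E} {f g : E → ℝ}

theorem ConvexOn.comp_concaveOn_of_antitone_s9 {h : ℝ → ℝ} (hh : ConvexOn ℝ univ h)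
    (hh' : Antitone h) (hf : ConcaveOn ℝ s f) : ConvexOn ℝ s (fun x => h (f x)) :=
  ⟨hf.1, fun _ hx _ hy _ _ ha hb hab =>
    (hh' (hf.2 hx hy ha hb hab)).trans (hh.2 (mem_univ _) (mem_univ _) ha hb hab)⟩

def LogConvexOn (s : Set E) (f : E → ℝ) : Prop :=
  (∀ x ∈ s, 0 < f x) ∧ ConvexOn ℝ s (fun x => log (f x))

theorem logConvexOn_iff_le_rpow_mul_rpow (hs : Convex ℝ s) (hf : ∀ x ∈ s, 0 < f x) :
    LogConvexOn s f ↔ ∀ ⦃x⦄, x ∈ s → ∀ ⦃y⦄, y ∈ s → ∀ ⦃a b : ℝ⦄, 0 ≤ a → 0 ≤ b → a + b = 1 →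
      f (a • x + b • y) ≤ f x ^ a * f y ^ b := by
  have key : ∀ ⦃x⦄, x ∈ s → ∀ ⦃y⦄, y ∈ s → ∀ ⦃a b : ℝ⦄, 0 ≤ a → 0 ≤ b → a + b = 1 →
      (log (f (a • x + b • y)) ≤ a • log (f x) + b • log (f y) ↔
        f (a • x + b • y) ≤ f x ^ a * f y ^ b) := fun x hx y hy a b ha hb hab => by
    have := hf x hx
    have := hf y hy
    rw [← log_le_log_iff (hf _ (hs hx hy ha hb hab)) (by positivity),
      log_mul (by positivity) (by positivity), log_rpow (hf x hx), log_rpow (hf y hy),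
      smul_eq_mul, smul_eq_mul]
  exact ⟨fun h x hx y hy a b ha hb hab => (key hx hy ha hb hab).1 (h.2.2 hx hy ha hb hab),
    fun h => ⟨hf, hs, fun x hx y hy a b ha hb hab => (key hx hy ha hb hab).2 (h hx hy ha hb hab)⟩⟩

theorem LogConvexOn.add (hf : LogConvexOn s f) (hg : LogConvexOn s g) :
    LogConvexOn s (fun x => f x + g x) := by
  have hs := hf.2.1
  have hf₀ := hf.1
  have hg₀ := hg.1
  rw [logConvexOn_iff_le_rpow_mul_rpow hs hf₀] at hf
  rw [logConvexOn_iff_le_rpow_mul_rpow hs hg₀] at hg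
  rw [logConvexOn_iff_le_rpow_mul_rpow hs fun x hx => add_pos (hf₀ x hx) (hg₀ x hx)]
  intro x hx y hy a b ha hb hab
  exact (add_le_add (hf hx hy ha hb hab) (hg hx hy ha hb hab)).trans
    (rpow_mul_rpow_add_rpow_mul_rpow_le (hf₀ x hx) (hg₀ x hx) (hf₀ y hy) (hg₀ y hy) ha hb hab)

theorem LogConvexOn.mul (hf : LogConvexOn s f) (hg : LogConvexOn s g) :
    LogConvexOn s (fun x => f x * g x) :=
  ⟨fun x hx => mul_pos (hf.1 x hx) (hg.1 x hx),
    (hf.2.add hg.2).congr fun x hx => (log_mul (hf.1 x hx).ne' (hg.1 x hx).ne').symm⟩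

theorem logConvexOn_const (hs : Convex ℝ s) {c : ℝ} (hc : 0 < c) : LogConvexOn s (fun _ => c) :=
  ⟨fun _ _ => hc, convexOn_const _ hs⟩

theorem ConvexOn.logConvexOn_exp (hf : ConvexOn ℝ s f) : LogConvexOn s (fun x => exp (f x)) :=
  ⟨fun _ _ => exp_pos _, by simpa only [log_exp] using hf⟩

theorem LogConvexOn.comp_linearMap {F : Type*} [AddCommGroup F] [Module ℝ F] {f : F → ℝ}
    {s : Set F} (hf : LogConvexOn s f) (L : E →ₗ[ℝ] F) : LogConvexOn (L ⁻¹' s) (f ∘ L) :=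
  ⟨fun x hx => hf.1 (L x) hx, hf.2.comp_linearMap L⟩

end LogConvex

theorem antitoneOn_div_exp_sub_one : AntitoneOn (fun w : ℝ => w / (exp w - 1)) (Ioi 0) := by
  intro v (hv : 0 < v) w (hw : 0 < w) hvw
  have slope := convexOn_exp.secant_mono (a := 0) (mem_univ _) (mem_univ v) (mem_univ w)
    hv.ne' hw.ne' hvw
  simp only [exp_zero, sub_zero] at slope
  have hpos : 0 < (exp v - 1) / v := div_pos (by linarith [add_one_lt_exp hv.ne']) hv
  simpa only [inv_div] using inv_anti₀ hpos slope

theorem antitoneOn_div_mul_log : AntitoneOn (fun w : ℝ => w / ((1 + w) * log (1 + w))) (Ioi 0) := by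
  intro v (hv : 0 < v) w (hw : 0 < w) hvw
  have slope := convexOn_mul_log.secant_mono (a := 1) (mem_Ici.2 zero_le_one)
    (mem_Ici.2 (by linarith : (0 : ℝ) ≤ 1 + v)) (mem_Ici.2 (by linarith : (0 : ℝ) ≤ 1 + w))
    (by linarith) (by linarith) (by linarith)
  simp only [log_one, mul_zero, sub_zero, add_sub_cancel_left] at slope
  have hpos : 0 < (1 + v) * log (1 + v) / v :=
    div_pos (mul_pos (by linarith) (log_pos (by linarith))) hv
  simpa only [inv_div] using inv_anti₀ hpos slope

theorem hasDerivAt_neg_log_one_sub_exp_neg_exp (u : ℝ) :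
    HasDerivAt (fun u => -log (1 - exp (-exp u))) (-(exp u / (exp (exp u) - 1))) u := by
  have h1 : exp (-exp u) < 1 := exp_lt_one_iff.2 (neg_lt_zero.2 (exp_pos u))
  have h2 : 1 < exp (exp u) := one_lt_exp_iff.2 (exp_pos u)
  refine (((hasDerivAt_exp u).fun_neg.exp.const_sub 1).log (by linarith)).fun_neg.congr_deriv ?_
  rw [exp_neg]
  field_simp

theorem convexOn_neg_log_one_sub_exp_neg_exp :
    ConvexOn ℝ univ (fun u => -log (1 - exp (-exp u))) := by
  have hd := hasDerivAt_neg_log_one_sub_exp_neg_exp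
  have hdiff : Differentiable ℝ (fun u => -log (1 - exp (-exp u))) :=
    fun u => (hd u).differentiableAt
  refine MonotoneOn.convexOn_of_deriv convex_univ hdiff.continuous.continuousOn
    hdiff.differentiableOn fun u _ v _ huv => ?_
  rw [(hd u).deriv, (hd v).deriv, neg_le_neg_iff]
  exact antitoneOn_div_exp_sub_one (exp_pos u) (exp_pos v) (exp_le_exp.2 huv)

theorem antitone_neg_log_one_sub_exp_neg_exp : Antitone (fun u => -log (1 - exp (-exp u))) :=
  fun u v huv => neg_le_neg <| log_le_log
    (sub_pos.2 (exp_lt_one_iff.2 (neg_lt_zero.2 (exp_pos u)))) (by gcongr)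

theorem concaveOn_log_log_one_add_mul_exp {c : ℝ} (hc : 0 < c) :
    ConcaveOn ℝ univ (fun x => log (log (1 + c * exp x))) := by
  have hlog : ∀ x, 0 < log (1 + c * exp x) := fun x => log_pos (by have := exp_pos x; nlinarith)
  have hd : ∀ x, HasDerivAt (fun x => log (log (1 + c * exp x)))
      (c * exp x / ((1 + c * exp x) * log (1 + c * exp x))) x := fun x =>
    ((((hasDerivAt_exp x).const_mul c).const_add 1).log (by positivity)).log
      (hlog x).ne' |>.congr_deriv (div_div _ _ _)
  have hdiff : Differentiable ℝ (fun x => log (log (1 + c * exp x))) :=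
    fun x => (hd x).differentiableAt
  refine AntitoneOn.concaveOn_of_deriv convex_univ hdiff.continuous.continuousOn
    hdiff.differentiableOn fun x _ y _ hxy => ?_
  rw [(hd x).deriv, (hd y).deriv]
  exact antitoneOn_div_mul_log (by positivity : 0 < c * exp x) (by positivity : 0 < c * exp y)
    (by gcongr)

theorem annuity_exp_exp (s t : ℝ) :
    annuity (exp s) (exp t) =
      0.01 * exp s / (1 - exp (-exp (t + log (log (1 + 0.01 * exp s))))) := by
  have hpow : (1 + 0.01 * exp s) ^ exp t = exp (exp (t + log (log (1 + 0.01 * exp s)))) := by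
    rw [rpow_def_of_pos (by positivity), exp_add,
      exp_log (log_pos (by have := exp_pos s; linarith)), mul_comm]
  have h : 1 < exp (exp (t + log (log (1 + 0.01 * exp s)))) := one_lt_exp_iff.2 (exp_pos _)
  rw [annuity, hpow, exp_neg]
  field_simp

theorem logConvexOn_annuity_exp_exp :
    LogConvexOn univ (fun q : ℝ × ℝ => annuity (exp q.1) (exp q.2)) := by
  have hsep : ConcaveOn ℝ univ (fun q : ℝ × ℝ => q.2 + log (log (1 + 0.01 * exp q.1))) := by
    have := (concaveOn_log_log_one_add_mul_exp (by norm_num : (0 : ℝ) < 0.01)).comp_linearMap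
      (LinearMap.fst ℝ ℝ ℝ)
    rw [preimage_univ] at this
    exact ((LinearMap.snd ℝ ℝ ℝ).concaveOn convex_univ).add this
  have hpos : ∀ q : ℝ × ℝ, 0 < 1 - exp (-exp (q.2 + log (log (1 + 0.01 * exp q.1)))) :=
    fun q => sub_pos.2 (exp_lt_one_iff.2 (neg_lt_zero.2 (exp_pos _)))
  refine ⟨fun q _ => by dsimp only; rw [annuity_exp_exp]; have := hpos q; positivity, ?_⟩
  refine ((((LinearMap.fst ℝ ℝ ℝ).convexOn convex_univ).add
    (convexOn_neg_log_one_sub_exp_neg_exp.comp_concaveOn_of_antitone_s9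
      antitone_neg_log_one_sub_exp_neg_exp hsep)).add_const (log 0.01)).congr fun q _ => ?_
  simp only [Pi.add_apply, LinearMap.fst_apply]
  rw [annuity_exp_exp, log_div (by positivity) (hpos q).ne',
    log_mul (by norm_num) (exp_ne_zero _), log_exp]
  ring

theorem Qecon_eq_div {p tau tL E X eta cY mS mF i : ℝ} (hX : X ≠ 0) (hXp : X + p * tau ≠ 0) :
    Qecon p tau tL E X eta cY mS mF i =
      8.76e-3 * E * eta * p * X / (31.5 * cY * p * X + mS * p + mF * annuity i tL * X +
        mF * annuity i tL * p * tau) := by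
  rw [Qecon, util, ← mul_div_mul_right _ _ hXp]
  field_simp
  ring

/-- **Log-log-concavity of `Q_econ`.** The map
`ℓ = (ℓ₁,…,ℓ₁₀) ↦ log Q_econ(e^{ℓ₁},…,e^{ℓ₁₀})` is concave on `ℝ¹⁰`. -/
theorem qecon_logLogConcave :
    ConcaveOn ℝ Set.univ
      (fun ℓ : Fin 10 → ℝ => Real.log (QeconV (fun j => Real.exp (ℓ j)))) := by
  have hexp (j : Fin 10) : LogConvexOn univ (fun ℓ : Fin 10 → ℝ => exp (ℓ j)) :=
    ((LinearMap.proj j).convexOn convex_univ).logConvexOn_exp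
  have hcoord (j : Fin 10) : ConcaveOn ℝ univ (fun ℓ : Fin 10 → ℝ => ℓ j) :=
    (LinearMap.proj j).concaveOn convex_univ
  have hφ : LogConvexOn univ (fun ℓ : Fin 10 → ℝ => annuity (exp (ℓ 9)) (exp (ℓ 2))) := by
    have := logConvexOn_annuity_exp_exp.comp_linearMap
      ((LinearMap.proj (R := ℝ) (φ := fun _ : Fin 10 => ℝ) 9).prod (LinearMap.proj 2))
    rwa [preimage_univ] at this
  have hden : LogConvexOn univ (fun ℓ : Fin 10 → ℝ =>
      31.5 * exp (ℓ 6) * exp (ℓ 0) * exp (ℓ 4) + exp (ℓ 7) * exp (ℓ 0) +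
        exp (ℓ 8) * annuity (exp (ℓ 9)) (exp (ℓ 2)) * exp (ℓ 4) +
        exp (ℓ 8) * annuity (exp (ℓ 9)) (exp (ℓ 2)) * exp (ℓ 0) * exp (ℓ 1)) :=
    ((((((logConvexOn_const convex_univ (by norm_num : (0 : ℝ) < 31.5)).mul (hexp 6)).mul
      (hexp 0)).mul (hexp 4)).add ((hexp 7).mul (hexp 0))).add
      (((hexp 8).mul hφ).mul (hexp 4))).add ((((hexp 8).mul hφ).mul (hexp 0)).mul (hexp 1))
  have hnum : ConcaveOn ℝ univ (fun ℓ : Fin 10 → ℝ =>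
      log (8.76e-3 * exp (ℓ 3) * exp (ℓ 5) * exp (ℓ 0) * exp (ℓ 4))) := by
    refine ((((hcoord 3).add (hcoord 5)).add (hcoord 0)).add (hcoord 4)).add_const
      (log 8.76e-3) |>.congr fun ℓ _ => ?_
    rw [log_mul (by positivity) (exp_ne_zero _), log_mul (by positivity) (exp_ne_zero _),
      log_mul (by positivity) (exp_ne_zero _), log_mul (by norm_num) (exp_ne_zero _)]
    simp only [Pi.add_apply, log_exp]
    ring
  refine (hnum.sub hden.2).congr fun ℓ _ => ?_
  rw [Pi.sub_apply, QeconV, Qecon_eq_div (exp_ne_zero _) (by positivity),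
    log_div (by positivity) (hden.1 ℓ trivial).ne']
end

section
/- For all strictly positive parameters (p, τ, τL, E, X, η, cY, mS, mF, i), if Q_econ ≥ 1 then α·E·η > β·cY + mS/X (i.e., the coefficient A₁ strictly exceeds A₂ + A₃): a fundamental requirement for economic viability is A = A₁ − A₂ − A₃ > 0. -/
/-!
Writing `N = p·U`, the gain factor is `Q_econ = A₁ N / ((A₂ + A₃) N + mF φ)` with `N > 0` and
`mF φ > 0`. Since the numerator is positive, `Q_econ ≥ 1` forces the denominator to be positive
and at most the numerator, so `(A₂ + A₃) N < A₁ N`, and dividing by `N` gives `A₂ + A₃ < A₁`.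
-/

theorem annuity_pos {i tL : ℝ} (hi : 0 < i) (htL : 0 < tL) : 0 < annuity i tL := by
  have hbase : (1 : ℝ) < 1 + 0.01 * i := by linarith
  have hpow : (1 : ℝ) < (1 + 0.01 * i) ^ tL := Real.one_lt_rpow hbase htL
  exact div_pos (mul_pos (by positivity) (by linarith)) (sub_pos.mpr hpow)

theorem util_pos {p tau X : ℝ} (hX : 0 < X) (hp : 0 ≤ p) (htau : 0 ≤ tau) :
    0 < util p tau X :=
  div_pos hX (by positivity)

theorem Qecon_eq (p tau tL E X eta cY mS mF i : ℝ) :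
    Qecon p tau tL E X eta cY mS mF i =
      8.76e-3 * E * eta * (p * util p tau X) /
        ((31.5 * cY + mS / X) * (p * util p tau X) + mF * annuity i tL) := by
  unfold Qecon
  ring

theorem lt_of_one_le_mul_div_mul_add {K : Type*} [Field K] [LinearOrder K] [IsStrictOrderedRing K]
    {a b c x : K} (ha : 0 < a) (hx : 0 < x) (hc : 0 < c) (h : 1 ≤ a * x / (b * x + c)) :
    b < a := by
  have hax : 0 < a * x := mul_pos ha hx
  rcases one_le_div_iff.mp h with ⟨-, hle⟩ | ⟨hneg, hle⟩
  · exact lt_of_mul_lt_mul_right (by linarith) hx.le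
  · linarith

theorem qecon_ge_one_implies_A_pos_general
    (p tau tL E X eta cY mS mF i : ℝ)
    (hp : 0 < p) (htau : 0 < tau) (htL : 0 < tL) (hE : 0 < E) (hX : 0 < X)
    (heta : 0 < eta) (hmF : 0 < mF) (hi : 0 < i)
    (hQ : 1 ≤ Qecon p tau tL E X eta cY mS mF i) :
    8.76e-3 * E * eta > 31.5 * cY + mS / X := by
  have hpU : 0 < p * util p tau X := mul_pos hp (util_pos hX hp.le htau.le)
  rw [Qecon_eq] at hQ
  exact lt_of_one_le_mul_div_mul_add (by positivity) hpU (mul_pos hmF (annuity_pos hi htL)) hQ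

/-- **Necessary condition for economic viability.** For all strictly positive
parameters, if `Q_econ ≥ 1` then `α·E·η > β·cY + mS/X`, i.e. `A₁ > A₂ + A₃`. -/
theorem qecon_ge_one_implies_A_pos
    (p tau tL E X eta cY mS mF i : ℝ)
    (hp : 0 < p) (htau : 0 < tau) (htL : 0 < tL) (hE : 0 < E) (hX : 0 < X)
    (heta : 0 < eta) (hcY : 0 < cY) (hmS : 0 < mS) (hmF : 0 < mF) (hi : 0 < i)
    (hQ : 1 ≤ Qecon p tau tL E X eta cY mS mF i) :
    8.76e-3 * E * eta > 31.5 * cY + mS / X :=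
  qecon_ge_one_implies_A_pos_general p tau tL E X eta cY mS mF i hp htau htL hE hX heta hmF hi hQ
end
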